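/- Let f : ω^{<ω} → ω^{<ω} be defined recursively by f(∅) = (1), f((m)) = (0)⌢(2m+1), and f(η⌢(m)) = f(η)⁻⌢(2t(η))⌢(2m+1) for nonempty η. Then for every left-leaning path X ⊆ ω^{<ω}, the image f[X] = {f(η) : η ∈ X} is a strict left-leaning path. -/

import Mathlib

/-! Common definitions: trees, tree languages, generalized indiscernibles, tree properties,
and Mekler's construction, following "On Mekler construction of NCTP and NBTP theories". -/

open FirstOrder Language Cardinal Set

universe u v w x y

namespace Paper

/-! ## Trees of finite sequences (`ω^{<ω}` as `List ℕ`) -/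

/-- The longest common initial segment (meet) of two finite sequences. -/
def listMeet : List ℕ → List ℕ → List ℕ
  | a :: as, b :: bs => if a = b then a :: listMeet as bs else []
  | _, _ => []

/-- `η ⊲ ν` : proper initial segment. -/
def ListPPre (η ν : List ℕ) : Prop := η <+: ν ∧ η ≠ ν

/-- `η ⊥ ν` : incomparability. -/
def ListIncomp (η ν : List ℕ) : Prop := ¬ η <+: ν ∧ ¬ ν <+: η

/-- The lexicographic order on `ω^{<ω}`. -/
def ListLex (η ν : List ℕ) : Prop :=
  ListPPre η ν ∨ (ListIncomp η ν ∧
    η.getD (listMeet η ν).length 0 < ν.getD (listMeet η ν).length 0)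

/-- `t(η)` : the last entry of `η`. -/
def lastEntry (η : List ℕ) : ℕ := η.getLastD 0

/-- Step of a left-leaning path: `η⁻⌢(j) ⊲ ν` for some `j ≤ t(η)`. -/
def LeftStep (η ν : List ℕ) : Prop := ∃ j ≤ lastEntry η, ListPPre (η.dropLast ++ [j]) ν

/-- Step of a strict left-leaning path: `η⁻⌢(j) ⊲ ν` for some `j < t(η)`. -/
def SLeftStep (η ν : List ℕ) : Prop := ∃ j < lastEntry η, ListPPre (η.dropLast ++ [j]) ν

/-- Step of a right-veering path: `η⁻⌢(j) ⊴ ν` for some `j > t(η)`. -/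
def RightStep (η ν : List ℕ) : Prop := ∃ j > lastEntry η, (η.dropLast ++ [j]) <+: ν

/-- Step of a strict right-veering path: `η⁻⌢(j) ⊲ ν` for some `j > t(η)`. -/
def SRightStep (η ν : List ℕ) : Prop := ∃ j > lastEntry η, ListPPre (η.dropLast ++ [j]) ν

/-- Step of a direct sibling set: `ν = η⁻⌢(j)` for some `j > t(η)`. -/
def SibStep (η ν : List ℕ) : Prop := ∃ j > lastEntry η, ν = η.dropLast ++ [j]

/-- `X` admits an enumeration `(η_i)` (finite or of order type `ω`) whose consecutive members
are related by the step relation `S`. -/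
def StepEnum {A : Type y} (S : A → A → Prop) (X : Set A) : Prop :=
  (∃ (n : ℕ) (e : Fin n → A), Function.Injective e ∧ Set.range e = X ∧
      ∀ (i : ℕ) (h : i + 1 < n), S (e ⟨i, Nat.lt_of_succ_lt h⟩) (e ⟨i + 1, h⟩)) ∨
  (∃ e : ℕ → A, Function.Injective e ∧ Set.range e = X ∧ ∀ i : ℕ, S (e i) (e (i + 1)))

/-- `X ⊆ ω^{<ω}` is a left-leaning path. -/
def IsLeftLeaning (X : Set (List ℕ)) : Prop := [] ∉ X ∧ StepEnum LeftStep X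

/-- `X ⊆ ω^{<ω}` is a strict left-leaning path. -/
def IsSLeftLeaning (X : Set (List ℕ)) : Prop := [] ∉ X ∧ StepEnum SLeftStep X

/-- `X ⊆ ω^{<ω}` is a right-veering path. -/
def IsRightVeering (X : Set (List ℕ)) : Prop := [] ∉ X ∧ StepEnum RightStep X

/-- `X ⊆ ω^{<ω}` is a strict right-veering path. -/
def IsSRightVeering (X : Set (List ℕ)) : Prop := [] ∉ X ∧ StepEnum SRightStep X

/-- `X ⊆ ω^{<ω}` is a direct sibling set. -/
def IsSibSet (X : Set (List ℕ)) : Prop := [] ∉ X ∧ StepEnum SibStep X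

/-- `μ` is the meet (`⊴`-greatest common lower bound) of the set `S`, with respect to
a prefix relation `pre`. -/
def IsMeetSetG {A : Type y} (pre : A → A → Prop) (S : Set A) (μ : A) : Prop :=
  (∀ η ∈ S, pre μ η) ∧ ∀ ξ : A, (∀ η ∈ S, pre ξ η) → pre ξ μ

/-- An enumeration witnessing that `X` is a descending comb, generic in the prefix relation
`pre` and the lexicographic relation `lex`:  `η_{i+1} <_lex η_i` and
`⋀_{j ≥ i} η_j ⊲ ⋀_{j ≥ i+1} η_j` for all `i`. -/
def DescCombEnumG {A : Type y} (pre lex : A → A → Prop) (X : Set A) : Prop :=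
  (∃ (n : ℕ) (e : Fin n → A), Function.Injective e ∧ Set.range e = X ∧
      (∀ (i : ℕ) (h : i + 1 < n), lex (e ⟨i + 1, h⟩) (e ⟨i, Nat.lt_of_succ_lt h⟩)) ∧
      (∀ (i : ℕ), i + 1 < n → ∀ μ μ' : A,
        IsMeetSetG pre {t | ∃ j : Fin n, i ≤ (j : ℕ) ∧ e j = t} μ →
        IsMeetSetG pre {t | ∃ j : Fin n, i + 1 ≤ (j : ℕ) ∧ e j = t} μ' →
        (pre μ μ' ∧ μ ≠ μ'))) ∨
  (∃ e : ℕ → A, Function.Injective e ∧ Set.range e = X ∧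
      (∀ i : ℕ, lex (e (i + 1)) (e i)) ∧
      (∀ i : ℕ, ∀ μ μ' : A,
        IsMeetSetG pre {t | ∃ j : ℕ, i ≤ j ∧ e j = t} μ →
        IsMeetSetG pre {t | ∃ j : ℕ, i + 1 ≤ j ∧ e j = t} μ' →
        (pre μ μ' ∧ μ ≠ μ')))

/-- `X` is a descending comb: an antichain admitting a descending comb enumeration. -/
def IsDescCombG {A : Type y} (pre lex : A → A → Prop) (X : Set A) : Prop :=
  (∀ η ∈ X, ∀ ν ∈ X, η ≠ ν → ¬ pre η ν ∧ ¬ pre ν η) ∧ DescCombEnumG pre lex X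

/-- Descending combs in `ω^{<ω}`. -/
def IsDescCombL (X : Set (List ℕ)) : Prop := IsDescCombG (· <+: ·) ListLex X

/-! ## Consistency and `k`-inconsistency of instances of a formula -/

/-- An elementary extension of the `L`-structure `M`. -/
structure ElemExt (L : FirstOrder.Language.{u, v}) (M : Type w) [L.Structure M] :
    Type (max u v w + 1) where
  Carrier : Type (max u v w)
  str : L.Structure Carrier
  emb : @FirstOrder.Language.ElementaryEmbedding L M Carrier _ str

attribute [instance] ElemExt.str

variable {L : FirstOrder.Language.{u, v}}

/-- `{φ(x, a_η) : η ∈ X}` is consistent, i.e. realized in some elementary extension of `M`. -/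
def Realizes {M : Type w} [L.Structure M] {n m : ℕ} (φ : L.Formula (Fin n ⊕ Fin m))
    {ι : Type y} (a : ι → Fin m → M) (X : Set ι) : Prop :=
  ∃ (E : ElemExt L M) (xv : Fin n → E.Carrier),
    ∀ η ∈ X, φ.Realize (Sum.elim xv (fun q => E.emb (a η q)))

/-- `{φ(x, a_η) : η ∈ X}` is `k`-inconsistent: no `k`-element subset is realizable in any
elementary extension of `M`. -/
def KIncon {M : Type w} [L.Structure M] {n m : ℕ} (φ : L.Formula (Fin n ⊕ Fin m))
    {ι : Type y} (a : ι → Fin m → M) (X : Set ι) (k : ℕ) : Prop :=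
  ∀ S : Finset ι, ↑S ⊆ X → S.card = k → ¬ Realizes φ a (S : Set ι)

/-! ## Tree properties -/

/-- `T` has CTP: some formula `φ(x, y)` and family `(a_η)_{η ∈ ω^{<ω}}` in a model of `T` are
such that `{φ(x, a_η) : η ∈ X}` is consistent for every descending comb `X` and
`{φ(x, a_{η|n}) : n < ω}` is `k`-inconsistent for every branch `η ∈ ω^ω`. -/
def HasCTP (T : L.Theory) : Prop :=
  ∃ (M : Theory.ModelType.{u, v, max u v} T) (n m : ℕ) (φ : L.Formula (Fin n ⊕ Fin m))
    (a : List ℕ → Fin m → M) (k : ℕ),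
    (∀ X : Set (List ℕ), IsDescCombL X → Realizes φ a X) ∧
    ∀ η : ℕ → ℕ, KIncon φ a {l | ∃ nn : ℕ, l = List.ofFn fun i : Fin nn => η i} k

/-- `T` has BTP: some formula `φ(x, y)` and family `(a_η)_{η ∈ ω^{<ω}}` in a model of `T` are
such that `{φ(x, a_η) : η ∈ X}` is consistent for every left-leaning path `X` and
`k`-inconsistent for every right-veering path `X`. -/
def HasBTP (T : L.Theory) : Prop :=
  ∃ (M : Theory.ModelType.{u, v, max u v} T) (n m : ℕ) (φ : L.Formula (Fin n ⊕ Fin m))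
    (a : List ℕ → Fin m → M) (k : ℕ),
    (∀ X : Set (List ℕ), IsLeftLeaning X → Realizes φ a X) ∧
    (∀ X : Set (List ℕ), IsRightVeering X → KIncon φ a X k)

/-- `T` has the tree property (a theory is simple iff it does not have it). -/
def HasTP (T : L.Theory) : Prop :=
  ∃ (M : Theory.ModelType.{u, v, max u v} T) (n m : ℕ) (φ : L.Formula (Fin n ⊕ Fin m))
    (a : List ℕ → Fin m → M) (k : ℕ),
    (∀ η : ℕ → ℕ, Realizes φ a {l | ∃ nn : ℕ, l = List.ofFn fun i : Fin nn => η i}) ∧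
    (∀ η : List ℕ, KIncon φ a {l | ∃ i : ℕ, l = η ++ [i]} k)

/-! ## The tree languages `L₀` and `L_s` -/

/-- The two binary relation symbols `⊴` and `<_lex` of the tree languages. -/
inductive TreeRel2 : Type
  | pre
  | lex

/-- The language `L₀ = {⊴, <_lex, ∧}`. -/
def L0 : FirstOrder.Language.{0, 0} where
  Functions n := match n with
    | 2 => Unit
    | _ => Empty
  Relations n := match n with
    | 2 => TreeRel2
    | _ => Empty

/-- The language `L_s = {⊴, <_lex, ∧} ∪ {P_i : i < ω}`. -/
def Ls : FirstOrder.Language.{0, 0} where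
  Functions n := match n with
    | 2 => Unit
    | _ => Empty
  Relations n := match n with
    | 1 => ℕ
    | 2 => TreeRel2
    | _ => Empty

/-- The `L_s`-structure on `ω^{<ω}`. -/
instance : Ls.Structure (List ℕ) where
  funMap {n} f v :=
    match n, f with
    | 2, _ => listMeet (v 0) (v 1)
    | 0, f => f.elim
    | 1, f => f.elim
    | (_ + 3), f => f.elim
  RelMap {n} r v :=
    match n, r with
    | 1, i => (v 0).length = i
    | 2, TreeRel2.pre => (v 0) <+: (v 1)
    | 2, TreeRel2.lex => ListLex (v 0) (v 1)
    | 0, r => r.elim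
    | (_ + 3), r => r.elim

/-! ## Generalized indiscernibility -/

/-- Two tuples have the same quantifier-free type in the `L'`-structure `A`. -/
def SameQfType (L' : FirstOrder.Language.{x, y}) (A : Type*) [L'.Structure A] {s : ℕ}
    (ηs νs : Fin s → A) : Prop :=
  ∀ φ : L'.Formula (Fin s), φ.IsQF → (φ.Realize ηs ↔ φ.Realize νs)

/-- The family `a` of `m`-tuples of `M`, indexed by the `L'`-structure `A`, is
`A`-indiscernible: finite index tuples with the same quantifier-free `L'`-type give
tuples with the same type in `M`. -/
def Indisc (L' : FirstOrder.Language.{x, y}) (A : Type*) [L'.Structure A] {M : Type w}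
    [L.Structure M] {m : ℕ} (a : A → Fin m → M) : Prop :=
  ∀ (s : ℕ) (ηs νs : Fin s → A), SameQfType L' A ηs νs →
    ∀ ψ : L.Formula (Fin s × Fin m),
      (ψ.Realize fun p => a (ηs p.1) p.2) ↔ (ψ.Realize fun p => a (νs p.1) p.2)

/-- `b'` realizes (in `N ⪰ M`) the complete type of `b` over the tuple `c` of `M`. -/
def RealizesTypeOver {M : Type w} [L.Structure M] {N : Type x} [L.Structure N]
    (g : M ↪ₑ[L] N) {nb m : ℕ} (b : Fin nb → M) (c : Fin m → M) (b' : Fin nb → N) : Prop :=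
  ∀ φ : L.Formula (Fin nb ⊕ Fin m),
    φ.Realize (Sum.elim b c) ↔ φ.Realize (Sum.elim b' fun q => g (c q))

/-- A sequence of `m`-tuples indexed by `ℕ` is order indiscernible over the tuple `b'`. -/
def OrdIndiscN {N : Type x} [L.Structure N] {nb m : ℕ} (b' : Fin nb → N)
    (c : ℕ → Fin m → N) : Prop :=
  ∀ (s : ℕ) (f g : Fin s → ℕ), StrictMono f → StrictMono g →
    ∀ ψ : L.Formula (Fin nb ⊕ Fin s × Fin m),
      ψ.Realize (Sum.elim b' fun p => c (f p.1) p.2) ↔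
      ψ.Realize (Sum.elim b' fun p => c (g p.1) p.2)

/-- A sequence of `m`-tuples indexed by the ordinals below `κ.ord` is order indiscernible
over the tuple `b'`. -/
def OrdIndiscO (κ : Cardinal.{y}) {N : Type x} [L.Structure N] {nb m : ℕ} (b' : Fin nb → N)
    (c : ∀ j : Ordinal.{y}, j < κ.ord → Fin m → N) : Prop :=
  ∀ (s : ℕ) (f g : Fin s → Ordinal.{y}) (hf : ∀ t, f t < κ.ord) (hg : ∀ t, g t < κ.ord),
    StrictMono f → StrictMono g →
    ∀ ψ : L.Formula (Fin nb ⊕ Fin s × Fin m),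
      ψ.Realize (Sum.elim b' fun p => c (f p.1) (hf p.1) p.2) ↔
      ψ.Realize (Sum.elim b' fun p => c (g p.1) (hg p.1) p.2)

/-! ## The tree `ω^{<κ}` for a cardinal `κ` -/

/-- An element of `ω^{<κ}`: a sequence of natural numbers indexed by the ordinals below some
ordinal `len < κ.ord` (represented as a function `Ordinal → Option ℕ` defined exactly
below `len`). -/
structure OTree (κ : Cardinal.{u}) : Type (u + 1) where
  len : Ordinal.{u}
  len_lt : len < κ.ord
  val : Ordinal.{u} → Option ℕ
  isSome_iff : ∀ β, (val β).isSome ↔ β < len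

/-- `η ⊴ ν` in `ω^{<κ}`. -/
def OPre {κ : Cardinal.{u}} (η ν : OTree κ) : Prop :=
  η.len ≤ ν.len ∧ ∀ β < η.len, η.val β = ν.val β

/-- `η ⊲ ν` in `ω^{<κ}`. -/
def OPPre {κ : Cardinal.{u}} (η ν : OTree κ) : Prop := OPre η ν ∧ η ≠ ν

/-- `η ⊥ ν` in `ω^{<κ}`. -/
def OIncomp {κ : Cardinal.{u}} (η ν : OTree κ) : Prop := ¬ OPre η ν ∧ ¬ OPre ν η

/-- The length of the meet `η ∧ ν`. -/
noncomputable def omeetLen {κ : Cardinal.{u}} (η ν : OTree κ) : Ordinal.{u} :=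
  sInf {β | min η.len ν.len ≤ β ∨ η.val β ≠ ν.val β}

lemma omeetLen_le {κ : Cardinal.{u}} (η ν : OTree κ) :
    omeetLen η ν ≤ min η.len ν.len :=
  csInf_le' (Or.inl le_rfl)

/-- The meet `η ∧ ν` (longest common initial segment) in `ω^{<κ}`. -/
noncomputable def omeet {κ : Cardinal.{u}} (η ν : OTree κ) : OTree κ where
  len := omeetLen η ν
  len_lt := (((omeetLen_le η ν).trans (min_le_left _ _)).trans_lt η.len_lt)
  val β := if β < omeetLen η ν then η.val β else none
  isSome_iff β := by
    show (if β < omeetLen η ν then η.val β else none).isSome ↔ β < omeetLen η ν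
    by_cases h : β < omeetLen η ν
    · rw [if_pos h, η.isSome_iff]
      exact ⟨fun _ => h, fun _ => h.trans_le ((omeetLen_le η ν).trans (min_le_left _ _))⟩
    · rw [if_neg h]
      simp [h]

/-- The lexicographic order on `ω^{<κ}`. -/
noncomputable def OLex {κ : Cardinal.{u}} (η ν : OTree κ) : Prop :=
  OPPre η ν ∨ (OIncomp η ν ∧ ∃ a b : ℕ,
    η.val (omeet η ν).len = some a ∧ ν.val (omeet η ν).len = some b ∧ a < b)

/-- `X ⊆ ω^{<κ}` is a path, i.e. linearly ordered by `⊴`. -/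
def IsPathO {κ : Cardinal.{u}} (X : Set (OTree κ)) : Prop :=
  ∀ η ∈ X, ∀ ν ∈ X, OPre η ν ∨ OPre ν η

/-- Descending combs in `ω^{<κ}`. -/
def IsDescCombO {κ : Cardinal.{u}} (X : Set (OTree κ)) : Prop :=
  IsDescCombG OPre OLex X

/-- The `L₀`-structure on `ω^{<κ}`. -/
noncomputable instance {κ : Cardinal.{u}} : L0.Structure (OTree κ) where
  funMap {n} f v :=
    match n, f with
    | 2, _ => omeet (v 0) (v 1)
    | 0, f => f.elim
    | 1, f => f.elim
    | (_ + 3), f => f.elim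
  RelMap {n} r v :=
    match n, r with
    | 2, TreeRel2.pre => OPre (v 0) (v 1)
    | 2, TreeRel2.lex => OLex (v 0) (v 1)
    | 0, r => r.elim
    | 1, r => r.elim
    | (_ + 3), r => r.elim

/-- The `L_s`-structure on `ω^{<κ}`. -/
noncomputable instance {κ : Cardinal.{u}} : Ls.Structure (OTree κ) where
  funMap {n} f v :=
    match n, f with
    | 2, _ => omeet (v 0) (v 1)
    | 0, f => f.elim
    | 1, f => f.elim
    | (_ + 3), f => f.elim
  RelMap {n} r v :=
    match n, r with
    | 1, i => (v 0).len = ((show ℕ from i) : Ordinal.{u})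
    | 2, TreeRel2.pre => OPre (v 0) (v 1)
    | 2, TreeRel2.lex => OLex (v 0) (v 1)
    | 0, r => r.elim
    | (_ + 3), r => r.elim

lemma add_lt_ord {κ : Cardinal.{u}} (hκ : ℵ₀ ≤ κ) {i j : Ordinal.{u}}
    (hi : i < κ.ord) (hj : j < κ.ord) : i + j < κ.ord := by
  rw [Cardinal.lt_ord] at *
  rw [Ordinal.card_add]
  exact Cardinal.add_lt_of_lt hκ hi hj

lemma one_lt_ord {κ : Cardinal.{u}} (hκ : ℵ₀ ≤ κ) : (1 : Ordinal.{u}) < κ.ord := by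
  rw [Cardinal.lt_ord]
  simpa using lt_of_lt_of_le Cardinal.one_lt_aleph0 hκ

lemma aleph0_le_of_big {c κ : Cardinal.{u}} (h : 2 ^ (c + ℵ₀) < κ) : ℵ₀ ≤ κ := by
  refine le_of_lt (lt_of_le_of_lt ?_ h)
  calc ℵ₀ ≤ 2 ^ ℵ₀ := (Cardinal.cantor ℵ₀).le
  _ ≤ 2 ^ (c + ℵ₀) := Cardinal.power_le_power_left two_ne_zero le_add_self

/-- The element of `ω^{<κ}` of length `l` whose entry at `β < l` is `v β`. -/
noncomputable def oseq (κ : Cardinal.{u}) (l : Ordinal.{u}) (hl : l < κ.ord)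
    (v : Ordinal.{u} → ℕ) : OTree κ where
  len := l
  len_lt := hl
  val β := if β < l then some (v β) else none
  isSome_iff β := by by_cases h : β < l <;> simp [h]

/-- The element `0^i ⌢ (1)` of `ω^{<κ}`. -/
noncomputable def node1 {κ : Cardinal.{u}} (hκ : ℵ₀ ≤ κ) (i : Ordinal.{u})
    (hi : i < κ.ord) : OTree κ :=
  oseq κ (i + 1) (add_lt_ord hκ hi (one_lt_ord hκ)) fun β => if β = i then 1 else 0

/-- The element `0^i ⌢ (1) ⌢ 0^j` of `ω^{<κ}`. -/
noncomputable def node10 {κ : Cardinal.{u}} (hκ : ℵ₀ ≤ κ) (i : Ordinal.{u}) (hi : i < κ.ord)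
    (j : Ordinal.{u}) (hj : j < κ.ord) : OTree κ :=
  oseq κ (i + 1 + j) (add_lt_ord hκ (add_lt_ord hκ hi (one_lt_ord hκ)) hj)
    fun β => if β = i then 1 else 0

/-- The element `0^i ⌢ (j+1)` of `ω^{<κ}`. -/
noncomputable def nodeJ1 {κ : Cardinal.{u}} (hκ : ℵ₀ ≤ κ) (i : Ordinal.{u}) (hi : i < κ.ord)
    (j : ℕ) : OTree κ :=
  oseq κ (i + 1) (add_lt_ord hκ hi (one_lt_ord hκ)) fun β => if β = i then j + 1 else 0

/-- The element `0^i ⌢ (2)^j ⌢ (1)` of `ω^{<κ}`. -/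
noncomputable def node2J1 {κ : Cardinal.{u}} (hκ : ℵ₀ ≤ κ) (i : Ordinal.{u}) (hi : i < κ.ord)
    (j : Ordinal.{u}) (hj : j < κ.ord) : OTree κ :=
  oseq κ (i + j + 1) (add_lt_ord hκ (add_lt_ord hκ hi hj) (one_lt_ord hκ))
    fun β => if β < i then 0 else if β < i + j then 2 else 1

/-! ## Level-`s`-indiscernibility -/

/-- The member of `ω^{<ω}|_{range x}` with length `x k` whose entry at the position `x t`
(for `t < k`) is `v t`, and `0` at the other positions below `x k`. -/
noncomputable def buildL {r : ℕ} (x : Fin r → ℕ) (k : Fin r) (v : Fin r → ℕ) : List ℕ :=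
  List.ofFn fun j : Fin (x k) =>
    if h : ∃ t : Fin r, t < k ∧ x t = (j : ℕ) then v h.choose else 0

/-- The member of `ω^{<κ}|_{range x}` with length `x k` whose entry at the position `x t`
(for `t < k`) is `v t`, and `0` at the other positions below `x k`. -/
noncomputable def buildO (κ : Cardinal.{u}) {r : ℕ} (x : Fin r → Ordinal.{u})
    (hx : ∀ t, x t < κ.ord) (k : Fin r) (v : Fin r → ℕ) : OTree κ :=
  oseq κ (x k) (hx k)
    fun β => if h : ∃ t : Fin r, t < k ∧ x t = β then v h.choose else 0

/-- A family indexed by `ω^{<ω}` is level-`s`-indiscernible: it is `s`-indiscernible, and for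
all finite `X, Y ⊆ ω` with `|X| = |Y|` the families indexed by `ω^{<ω}|_X` and `ω^{<ω}|_Y`
have the same type, matched via the bijection induced by the order isomorphism `X → Y`. -/
def LevelSIndiscL {M : Type w} [L.Structure M] {m : ℕ} (a : List ℕ → Fin m → M) : Prop :=
  Indisc (L := L) Ls (List ℕ) a ∧
  ∀ (r : ℕ) (x y : Fin r → ℕ), StrictMono x → StrictMono y →
    ∀ (s : ℕ) (ks : Fin s → Fin r) (vs : Fin s → Fin r → ℕ)
      (ψ : L.Formula (Fin s × Fin m)),
      (ψ.Realize fun p => a (buildL x (ks p.1) (vs p.1)) p.2) ↔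
      (ψ.Realize fun p => a (buildL y (ks p.1) (vs p.1)) p.2)

/-- A family indexed by `ω^{<κ}` is level-`s`-indiscernible. -/
def LevelSIndiscO {κ : Cardinal.{y}} {M : Type w} [L.Structure M] {m : ℕ}
    (a : OTree κ → Fin m → M) : Prop :=
  Indisc (L := L) Ls (OTree κ) a ∧
  ∀ (r : ℕ) (x y : Fin r → Ordinal.{y}) (hx : ∀ t, x t < κ.ord) (hy : ∀ t, y t < κ.ord),
    StrictMono x → StrictMono y →
    ∀ (s : ℕ) (ks : Fin s → Fin r) (vs : Fin s → Fin r → ℕ)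
      (ψ : L.Formula (Fin s × Fin m)),
      (ψ.Realize fun p => a (buildO κ x hx (ks p.1) (vs p.1)) p.2) ↔
      (ψ.Realize fun p => a (buildO κ y hy (ks p.1) (vs p.1)) p.2)

/-! ## `λ^{<κ}` : sequences with values in a cardinal `lam` -/

/-- An element of `lam^{<κ}`: a sequence of ordinals `< lam.ord` indexed by the ordinals below
some ordinal `len < κ.ord`. -/
structure OTreeV (κ lam : Cardinal.{u}) : Type (u + 1) where
  len : Ordinal.{u}
  len_lt : len < κ.ord
  val : Ordinal.{u} → Option Ordinal.{u}
  isSome_iff : ∀ β, (val β).isSome ↔ β < len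
  val_lt : ∀ β c, val β = some c → c < lam.ord

/-- `η ⊴ ν` in `lam^{<κ}`. -/
def OVPre {κ lam : Cardinal.{u}} (η ν : OTreeV κ lam) : Prop :=
  η.len ≤ ν.len ∧ ∀ β < η.len, η.val β = ν.val β

/-- `ξ ⊵ ρ ⌢ (i)`: `ξ` extends `ρ` and its entry at the position `ρ.len` is `i`. -/
def OVExtWith {κ lam : Cardinal.{u}} (ρ : OTreeV κ lam) (i : Ordinal.{u})
    (ξ : OTreeV κ lam) : Prop :=
  OVPre ρ ξ ∧ ξ.val ρ.len = some i

/-! ## The map `f` of the weak-BTP lemma -/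

/-- Auxiliary recursion (on reversed sequences) for `fM`. -/
def fMaux : List ℕ → List ℕ
  | [] => [1]
  | [m] => [0, 2 * m + 1]
  | m :: t :: rest => (fMaux (t :: rest)).dropLast ++ [2 * t, 2 * m + 1]

/-- The map `f : ω^{<ω} → ω^{<ω}` with `f(∅) = (1)`, `f((m)) = (0)⌢(2m+1)` and
`f(η⌢(m)) = f(η)⁻⌢(2t(η))⌢(2m+1)` for nonempty `η`. -/
def fM (η : List ℕ) : List ℕ := fMaux η.reverse

/-! ## Mekler's construction -/

/-- A nice graph: at least two vertices; for any two distinct vertices `a`, `b` there is a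
vertex `c ∉ {a, b}` adjacent to `a` and not to `b`; and no cycles of length `3` or `4`. -/
def IsNiceGraph {V : Type y} (G : SimpleGraph V) : Prop :=
  (∃ a b : V, a ≠ b) ∧
  (∀ a b : V, a ≠ b → ∃ c : V, c ≠ a ∧ c ≠ b ∧ G.Adj c a ∧ ¬ G.Adj c b) ∧
  (¬ ∃ a b c : V, a ≠ b ∧ b ≠ c ∧ a ≠ c ∧ G.Adj a b ∧ G.Adj b c ∧ G.Adj c a) ∧
  (¬ ∃ a b c d : V, a ≠ b ∧ a ≠ c ∧ a ≠ d ∧ b ≠ c ∧ b ≠ d ∧ c ≠ d ∧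
      G.Adj a b ∧ G.Adj b c ∧ G.Adj c d ∧ G.Adj d a)

open scoped commutatorElement in
/-- The relations presenting the Mekler group of a graph on `ℕ`: `w^p` for every word `w`
(exponent `p`), `[[u,v],w]` for all words (2-nilpotency), and `[x_i, x_j]` for adjacent
vertices `i`, `j`. -/
def meklerRels (p : ℕ) (G : SimpleGraph ℕ) : Set (FreeGroup ℕ) :=
  {w | ∃ u : FreeGroup ℕ, w = u ^ p} ∪
  {w | ∃ u v t : FreeGroup ℕ, w = ⁅⁅u, v⁆, t⁆} ∪
  {w | ∃ i j : ℕ, G.Adj i j ∧ w = ⁅FreeGroup.of i, FreeGroup.of j⁆}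

/-- The Mekler group `G_p(C)` of a graph `C` on the vertex set `ℕ`: the group presented by
the generators `x_i` (`i < ω`) subject to the relations `meklerRels`. -/
def MeklerGroup (p : ℕ) (G : SimpleGraph ℕ) : Type :=
  PresentedGroup (meklerRels p G)

instance (p : ℕ) (G : SimpleGraph ℕ) : Group (MeklerGroup p G) :=
  inferInstanceAs (Group (PresentedGroup (meklerRels p G)))

/-- The language of groups. -/
def grpLang : FirstOrder.Language.{0, 0} where
  Functions n := match n with
    | 0 => Unit
    | 1 => Unit
    | 2 => Unit
    | _ => Empty
  Relations _ := Empty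

/-- The `grpLang`-structure on a group. -/
instance grpStructure (G : Type y) [Group G] : grpLang.Structure G where
  funMap {n} f v :=
    match n, f with
    | 0, _ => 1
    | 1, _ => (v 0)⁻¹
    | 2, _ => v 0 * v 1
    | (_ + 3), f => f.elim
  RelMap := fun {_} r => r.elim

/-! ## The trees `𝒯_α` -/

/-- An element of `𝒯_α`: a finitely supported function `η : [start, α) → ω`, where
`start < α` is a non-limit ordinal. -/
structure Tcal (α : Ordinal.{u}) : Type (u + 1) where
  start : Ordinal.{u}
  start_lt : start < α
  start_nl : ¬ Order.IsSuccLimit start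
  val : Ordinal.{u} → Option ℕ
  isSome_iff : ∀ γ, (val γ).isSome ↔ (start ≤ γ ∧ γ < α)
  finsupp : {γ : Ordinal.{u} | val γ ≠ none ∧ val γ ≠ some 0}.Finite

/-- `η ⊴ ν` in `𝒯_α`, i.e. `η ⊆ ν` as functions. -/
def TPre {α : Ordinal.{u}} (η ν : Tcal α) : Prop :=
  ∀ γ a, η.val γ = some a → ν.val γ = some a

/-- `η ⊲ ν` in `𝒯_α`. -/
def TPPre {α : Ordinal.{u}} (η ν : Tcal α) : Prop := TPre η ν ∧ η ≠ ν

/-- `η ⊥ ν` in `𝒯_α`. -/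
def TIncomp {α : Ordinal.{u}} (η ν : Tcal α) : Prop := ¬ TPre η ν ∧ ¬ TPre ν η

/-- The set of possible starting points of common restrictions of `η` and `ν` that agree with
both of them from that point on. -/
def tmeetSet {α : Ordinal.{u}} (η ν : Tcal α) : Set Ordinal.{u} :=
  {β | ¬ Order.IsSuccLimit β ∧ η.start ≤ β ∧ ν.start ≤ β ∧ β < α ∧ ∀ γ, β ≤ γ → η.val γ = ν.val γ}

open Classical in
/-- The meet `η ∧ ν` (the `⊴`-largest common restriction) in `𝒯_α` (with junk value `η` in
the degenerate case where no common restriction exists). -/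
noncomputable def tmeet {α : Ordinal.{u}} (η ν : Tcal α) : Tcal α :=
  if h : (tmeetSet η ν).Nonempty then
    { start := sInf (tmeetSet η ν)
      start_lt := (csInf_mem h).2.2.2.1
      start_nl := (csInf_mem h).1
      val := fun γ => if sInf (tmeetSet η ν) ≤ γ then η.val γ else none
      isSome_iff := by
        intro γ
        show (if sInf (tmeetSet η ν) ≤ γ then η.val γ else none).isSome ↔ _
        by_cases hγ : sInf (tmeetSet η ν) ≤ γ
        · rw [if_pos hγ, η.isSome_iff]
          have h1 : η.start ≤ γ := le_trans (csInf_mem h).2.1 hγ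
          exact ⟨fun h2 => ⟨hγ, h2.2⟩, fun h2 => ⟨h1, h2.2⟩⟩
        · rw [if_neg hγ]
          simp [hγ]
      finsupp := by
        apply η.finsupp.subset
        intro γ hγ
        simp only [Set.mem_setOf_eq] at hγ ⊢
        by_cases h2 : sInf (tmeetSet η ν) ≤ γ
        · rw [if_pos h2] at hγ; exact hγ
        · rw [if_neg h2] at hγ; simp at hγ }
  else η

/-- The lexicographic order on `𝒯_α`: `η <_lex ν` iff `η ⊲ ν`, or `η ⊥ ν` and `η(δ) < ν(δ)`
where `δ` is the largest ordinal at which `η` and `ν` are both defined and disagree. -/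
def TLex {α : Ordinal.{u}} (η ν : Tcal α) : Prop :=
  TPPre η ν ∨ (TIncomp η ν ∧ ∃ (δ : Ordinal.{u}) (a b : ℕ),
    η.val δ = some a ∧ ν.val δ = some b ∧ a < b ∧
    ∀ γ, δ < γ → η.val γ = ν.val γ)

/-- The `L_s`-structure on `𝒯_α`. -/
noncomputable instance {α : Ordinal.{u}} : Ls.Structure (Tcal α) where
  funMap {n} f v :=
    match n, f with
    | 2, _ => tmeet (v 0) (v 1)
    | 0, f => f.elim
    | 1, f => f.elim
    | (_ + 3), f => f.elim
  RelMap {n} r v :=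
    match n, r with
    | 1, i => (v 0).start = ((show ℕ from i) : Ordinal.{u})
    | 2, TreeRel2.pre => TPre (v 0) (v 1)
    | 2, TreeRel2.lex => TLex (v 0) (v 1)
    | 0, r => r.elim
    | (_ + 3), r => r.elim

/-- The member of `𝒯_α|_{range x}` with `start = x k`, whose value at position `x t`
(for `t ≥ k`) is `v t`, and `0` at the other positions of `[x k, α)`. -/
noncomputable def buildT (α : Ordinal.{u}) {r : ℕ} (x : Fin r → Ordinal.{u})
    (hx : ∀ t, x t < α) (hnl : ∀ t, ¬ Order.IsSuccLimit (x t)) (k : Fin r) (v : Fin r → ℕ) :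
    Tcal α where
  start := x k
  start_lt := hx k
  start_nl := hnl k
  val γ :=
    if x k ≤ γ ∧ γ < α then
      (if h : ∃ t : Fin r, k ≤ t ∧ x t = γ then some (v h.choose) else some 0)
    else none
  isSome_iff := by
    intro γ
    show (if x k ≤ γ ∧ γ < α then _ else none).isSome ↔ _
    by_cases h : x k ≤ γ ∧ γ < α
    · rw [if_pos h]
      refine ⟨fun _ => h, fun _ => ?_⟩
      by_cases h2 : ∃ t : Fin r, k ≤ t ∧ x t = γ
      · rw [dif_pos h2]; rfl
      · rw [dif_neg h2]; rfl
    · rw [if_neg h]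
      simpa using h
  finsupp := by
    apply (Set.finite_range x).subset
    intro γ hγ
    simp only [Set.mem_setOf_eq] at hγ
    obtain ⟨h1, h2⟩ := hγ
    by_cases h : x k ≤ γ ∧ γ < α
    · rw [if_pos h] at h1 h2
      by_cases h3 : ∃ t : Fin r, k ≤ t ∧ x t = γ
      · exact ⟨h3.choose, h3.choose_spec.2⟩
      · rw [dif_neg h3] at h2
        exact absurd rfl h2
    · rw [if_neg h] at h1
      exact absurd rfl h1

lemma not_isLimit_of_lt_omega0 {o : Ordinal.{u}} (h : o < Ordinal.omega0) : ¬ Order.IsSuccLimit o :=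
  fun hl => absurd (Ordinal.omega0_le_of_isSuccLimit hl) (not_le.2 h)

/-- A family indexed by `𝒯_α` is level-`s`-indiscernible: it is `s`-indiscernible and for all
finite `X, Y ⊆ ¬lim(α)` with `|X| = |Y|` the families indexed by `𝒯_α|_X` and `𝒯_α|_Y` have
the same type, matched via the isomorphism induced by the order isomorphism `X → Y`. -/
def LevelSIndiscT {α : Ordinal.{y}} {M : Type w} [L.Structure M] {m : ℕ}
    (c : Tcal α → Fin m → M) : Prop :=
  Indisc (L := L) Ls (Tcal α) c ∧
  ∀ (r : ℕ) (x y : Fin r → Ordinal.{y}) (hx : ∀ t, x t < α) (hy : ∀ t, y t < α)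
    (hxnl : ∀ t, ¬ Order.IsSuccLimit (x t)) (hynl : ∀ t, ¬ Order.IsSuccLimit (y t)),
    StrictMono x → StrictMono y →
    ∀ (s : ℕ) (ks : Fin s → Fin r) (vs : Fin s → Fin r → ℕ)
      (ψ : L.Formula (Fin s × Fin m)),
      (ψ.Realize fun p => c (buildT α x hx hxnl (ks p.1) (vs p.1)) p.2) ↔
      (ψ.Realize fun p => c (buildT α y hy hynl (ks p.1) (vs p.1)) p.2)

/-- `ℶ_o(c)`: the `o`-th iterate of cardinal exponentiation starting at `c`. -/
noncomputable def bethFrom (c : Cardinal.{u}) (o : Ordinal.{u}) : Cardinal.{u} :=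
  Ordinal.limitRecOn o c (fun _ ih => 2 ^ ih) fun a _ IH => ⨆ b : Iio a, IH b.1 b.2


lemma fM_closed (σ : List ℕ) (m : ℕ) :
    fM (σ ++ [m]) = 0 :: σ.map (fun x => 2 * x) ++ [2 * m + 1] := by
  induction σ using List.reverseRecOn generalizing m with
  | nil => rfl
  | append_singleton τ t ih =>
    have h1 : ((τ ++ [t]) ++ [m]).reverse = m :: t :: τ.reverse := by simp
    have h2 : fMaux (m :: t :: τ.reverse) =
        (fMaux (t :: τ.reverse)).dropLast ++ [2 * t, 2 * m + 1] := rfl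
    have h3 : fMaux (t :: τ.reverse) = fM (τ ++ [t]) := by
      rw [fM]; simp
    rw [fM, h1, h2, h3, ih, List.dropLast_concat]
    simp

lemma fM_ne_nil (η : List ℕ) : fM η ≠ [] := by
  rcases η.eq_nil_or_concat with rfl | ⟨σ, m, rfl⟩
  · simp [fM, fMaux]
  · rw [List.concat_eq_append, fM_closed]; simp

lemma two_mul_inj : Function.Injective (fun x : ℕ => 2 * x) := fun a b h => by
  dsimp only at h; omega

lemma fM_injOn (η ν : List ℕ) (hη : η ≠ []) (hν : ν ≠ []) (h : fM η = fM ν) : η = ν := by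
  rcases η.eq_nil_or_concat with rfl | ⟨σ, m, rfl⟩; · exact absurd rfl hη
  rw [List.concat_eq_append] at *
  rcases ν.eq_nil_or_concat with rfl | ⟨τ, n, rfl⟩; · exact absurd rfl hν
  rw [List.concat_eq_append] at *
  rw [fM_closed, fM_closed] at h
  have h' : σ.map (fun x => 2 * x) ++ [2 * m + 1] =
      τ.map (fun x => 2 * x) ++ [2 * n + 1] := by
    simpa using h
  obtain ⟨h1, h2⟩ := List.append_inj' h' rfl
  have : σ = τ := List.map_injective_iff.2 two_mul_inj h1
  subst this
  simp only [List.cons.injEq] at h2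
  have : m = n := by omega
  subst this; rfl

lemma lastEntry_concat (σ : List ℕ) (m : ℕ) : lastEntry (σ ++ [m]) = m := by
  simp [lastEntry]

lemma fM_step (η ν : List ℕ) (hη : η ≠ []) (hν : ν ≠ []) (h : LeftStep η ν) :
    SLeftStep (fM η) (fM ν) := by
  rcases η.eq_nil_or_concat with rfl | ⟨σ, m, rfl⟩; · exact absurd rfl hη
  rw [List.concat_eq_append] at *
  obtain ⟨j, hj, hpre, hne⟩ := h
  rw [lastEntry_concat] at hj
  have hdl : (σ ++ [m]).dropLast = σ := by simp
  rw [hdl] at hpre hne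
  obtain ⟨ρ, hρ⟩ := hpre
  have hρne : ρ ≠ [] := by
    rintro rfl
    exact hne (by simpa using hρ)
  obtain ⟨ρ', n, rfl⟩ := ρ.eq_nil_or_concat.resolve_left hρne
  rw [List.concat_eq_append] at *
  have hν' : ν = (σ ++ [j] ++ ρ') ++ [n] := by rw [← hρ]; simp
  refine ⟨2 * j, ?_, ?_⟩
  · rw [fM_closed]
    simp only [lastEntry, List.getLastD_concat]
    omega
  · subst hν'
    rw [fM_closed, fM_closed]
    constructor
    · refine ⟨ρ'.map (fun x => 2 * x) ++ [2 * n + 1], ?_⟩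
      rw [List.dropLast_concat]
      simp
    · intro hcontra
      apply_fun List.length at hcontra
      simp at hcontra

lemma stepEnum_image {S S' : List ℕ → List ℕ → Prop} {X : Set (List ℕ)} (f : List ℕ → List ℕ)
    (hinj : Set.InjOn f X)
    (hstep : ∀ a ∈ X, ∀ b ∈ X, S a b → S' (f a) (f b))
    (h : StepEnum S X) : StepEnum S' (f '' X) := by
  rcases h with ⟨n, e, he, hr, hs⟩ | ⟨e, he, hr, hs⟩
  · have hmem : ∀ i, e i ∈ X := fun i => hr ▸ ⟨i, rfl⟩
    exact Or.inl ⟨n, f ∘ e, fun i j hij => he (hinj (hmem i) (hmem j) hij),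
      by rw [Set.range_comp, hr],
      fun i hi => hstep _ (hmem _) _ (hmem _) (hs i hi)⟩
  · have hmem : ∀ i, e i ∈ X := fun i => hr ▸ ⟨i, rfl⟩
    exact Or.inr ⟨f ∘ e, fun i j hij => he (hinj (hmem i) (hmem j) hij),
      by rw [Set.range_comp, hr],
      fun i => hstep _ (hmem _) _ (hmem _) (hs i)⟩


/-- The image under `f` of any left-leaning path is a strict left-leaning
path. -/
theorem statement_9 (X : Set (List ℕ)) (hX : IsLeftLeaning X) :
    IsSLeftLeaning (fM '' X) := by
  obtain ⟨hnil, henum⟩ := hX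
  have hne : ∀ a ∈ X, a ≠ [] := fun a ha h => hnil (h ▸ ha)
  refine ⟨?_, ?_⟩
  · rintro ⟨η, hη, hfη⟩
    exact fM_ne_nil η hfη
  · exact stepEnum_image fM
      (fun a ha b hb hab => fM_injOn a b (hne a ha) (hne b hb) hab)
      (fun a ha b hb hab => fM_step a b (hne a ha) (hne b hb) hab) henum

end Paper
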